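/- arXiv:2005.04371 — 2 statements merged into one kernel-verified Lean document; each statement's English description precedes it below -/
import Mathlib

section
/- There exists a constant C > 0 such that for every n ≥ 0, every choice of pairwise distinct positive integers k_1, …, k_n, k_{n+1}, and all positive integers r_1, …, r_n, r, one has λ({x ∈ (0,1) irrational : a_{k_1}(x) = r_1, …, a_{k_n}(x) = r_n, a_{k_{n+1}}(x) = r}) ≤ (C/r²) · λ({x ∈ (0,1) irrational : a_{k_1}(x) = r_1, …, a_{k_n}(x) = r_n}). -/
open MeasureTheory Filter Real

/-- The Gauss map `G(y) = 1/y - ⌊1/y⌋` (with `G 0 = 0`). -/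
noncomputable def gaussMap (y : ℝ) : ℝ := Int.fract (1 / y)

/-- The `n`-th regular continued fraction digit `a_n(x) = ⌊1 / G^{n-1}(x)⌋`. -/
noncomputable def rcfDigit (x : ℝ) (n : ℕ) : ℕ := (⌊1 / gaussMap^[n - 1] x⌋).toNat

/-!
On the cylinder of a digit word `w = [a₁, …, aₙ]`, the map `G^n` is inverted by the Möbius map
`ψ_w t = [0; a₁, …, aₙ + t] = (p + p' t) / (q + q' t)`, and
`|ψ_w s - ψ_w t| = |s - t| / (d s · d t)` with `d t = q + q' t`. Since `0 ≤ q' ≤ q`, the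
denominator varies by a factor at most 2 on `[0, 1]`, so `ψ_w` scales Lebesgue measure by
`(q + q')⁻²` up to a factor 4. Hence `λ(I(w) ∩ G^{-n} A)` agrees with `λ(I(w)) λ(A)` up to a
factor 4, and, summing over cylinders, the same holds for any union of rank-`n` cylinders.
Conditioning on the digits before position `K = m + 1` and writing the conditions after `K` as
`G^{-(m+1)} B`, the event `a_K = R` has measure at most a constant times `λ(I[R]) ≲ R⁻²` times
that of the event `a_K = 1`, which is contained in the unconditioned set.
-/

open scoped ENNReal

def rcfDomain : Set ℝ := {x | x ∈ Set.Ioo 0 1 ∧ Irrational x}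

lemma measurableSet_rcfDomain : MeasurableSet rcfDomain :=
  measurableSet_Ioo.inter (Set.countable_range _).measurableSet.compl

lemma volume_rcfDomain : volume rcfDomain = 1 := by
  have : rcfDomain = Set.Ioo 0 1 \ Set.range ((↑) : ℚ → ℝ) := rfl
  rw [this, measure_sdiff_null ((Set.countable_range _).measure_zero _), Real.volume_Ioo]
  norm_num

lemma measurable_gaussMap : Measurable gaussMap :=
  measurable_fract.comp (measurable_const.div measurable_id)

lemma rcfDigit_add_iterate (x : ℝ) {j : ℕ} (hj : 0 < j) (n : ℕ) :
    rcfDigit x (j + n) = rcfDigit (gaussMap^[n] x) j := by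
  rw [rcfDigit, rcfDigit, ← Function.iterate_add_apply, Nat.sub_add_comm hj]

lemma rcfDigit_one (x : ℝ) : rcfDigit x 1 = ⌊x⁻¹⌋.toNat := by
  simp [rcfDigit]

lemma measurable_rcfDigit_one : Measurable fun x => rcfDigit x 1 := by
  simp only [rcfDigit_one]
  exact (measurable_from_top (f := Int.toNat)).comp (Int.measurable_floor.comp measurable_inv)

lemma rcfDigit_one_add_gaussMap {x : ℝ} (hx : 0 < x) :
    (rcfDigit x 1 : ℝ) + gaussMap x = x⁻¹ := by
  have : 0 ≤ ⌊x⁻¹⌋ := Int.floor_nonneg.2 (inv_nonneg.2 hx.le)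
  rw [rcfDigit_one, gaussMap, one_div]
  exact_mod_cast (Int.toNat_of_nonneg this).symm ▸ Int.floor_add_fract x⁻¹

lemma rcfDigit_one_pos {x : ℝ} (hx : x ∈ rcfDomain) : 0 < rcfDigit x 1 := by
  have : (1 : ℝ) ≤ x⁻¹ := one_le_inv_iff₀.2 ⟨hx.1.1, hx.1.2.le⟩
  rw [rcfDigit_one]
  have : 1 ≤ ⌊x⁻¹⌋ := Int.le_floor.2 (by exact_mod_cast this)
  omega

lemma mapsTo_gaussMap : Set.MapsTo gaussMap rcfDomain rcfDomain := by
  intro x hx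
  have hirr : Irrational (gaussMap x) := by
    rw [gaussMap, Int.fract, one_div]
    exact hx.2.inv.sub_intCast _
  refine ⟨⟨(Int.fract_nonneg _).lt_of_ne fun h => hirr.ne_int 0 ?_, Int.fract_lt_one _⟩, hirr⟩
  rw [gaussMap, ← h, Int.cast_zero]

lemma inv_natCast_add_mem_rcfDomain {t : ℝ} (ht : t ∈ rcfDomain) {a : ℕ} (ha : 0 < a) :
    ((a : ℝ) + t)⁻¹ ∈ rcfDomain := by
  obtain ⟨⟨ht0, -⟩, hirr⟩ := ht
  have ha' : (1 : ℝ) ≤ a := by exact_mod_cast ha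
  exact ⟨⟨inv_pos.2 (by linarith), inv_lt_one_of_one_lt₀ (by linarith)⟩, (hirr.natCast_add a).inv⟩

lemma rcfDigit_one_inv_natCast_add {t : ℝ} (ht : t ∈ Set.Ico 0 1) (a : ℕ) :
    rcfDigit ((a : ℝ) + t)⁻¹ 1 = a := by
  rw [rcfDigit_one, inv_inv, Int.floor_natCast_add, Int.floor_eq_zero_iff.2 ht, add_zero,
    Int.toNat_natCast]

lemma gaussMap_inv_natCast_add {t : ℝ} (ht : t ∈ Set.Ico 0 1) (a : ℕ) :
    gaussMap ((a : ℝ) + t)⁻¹ = t := by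
  rw [gaussMap, one_div, inv_inv, Int.fract_natCast_add, Int.fract_eq_self.2 ht]

noncomputable def rcfDigits (x : ℝ) : ℕ → List ℕ
  | 0 => []
  | m + 1 => rcfDigit x 1 :: rcfDigits (gaussMap x) m

lemma rcfDigits_one (x : ℝ) : rcfDigits x 1 = [rcfDigit x 1] := rfl

@[simp] lemma length_rcfDigits (x : ℝ) (m : ℕ) : (rcfDigits x m).length = m := by
  induction m generalizing x with
  | zero => rfl
  | succ m ih => simp [rcfDigits, ih]

lemma getElem?_rcfDigits (x : ℝ) {i m : ℕ} (hi : i < m) :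
    (rcfDigits x m)[i]? = some (rcfDigit x (i + 1)) := by
  induction m generalizing x i with
  | zero => omega
  | succ m ih =>
    cases i with
    | zero => rfl
    | succ i =>
      simp [rcfDigits, ih _ (Nat.lt_of_succ_lt_succ hi), rcfDigit_add_iterate x (j := i + 1)]

lemma pos_of_mem_rcfDigits {x : ℝ} (hx : x ∈ rcfDomain) {m a : ℕ} (ha : a ∈ rcfDigits x m) :
    0 < a := by
  induction m generalizing x with
  | zero => simp [rcfDigits] at ha
  | succ m ih =>
    rcases List.mem_cons.1 ha with rfl | ha
    · exact rcfDigit_one_pos hx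
    · exact ih (mapsTo_gaussMap hx) ha

lemma measurableSet_rcfDigits_eq (m : ℕ) (w : List ℕ) :
    MeasurableSet {x | rcfDigits x m = w} := by
  induction m generalizing w with
  | zero => exact .const ([] = w)
  | succ m ih =>
    cases w with
    | nil => simp [rcfDigits]
    | cons a w =>
      simp only [rcfDigits, List.cons.injEq, Set.ofPred_and]
      exact (measurable_rcfDigit_one (measurableSet_singleton a)).inter
        (measurable_gaussMap (ih w))

def rcfCylinder (m : ℕ) (S : Set (List ℕ)) : Set ℝ := rcfDomain ∩ (rcfDigits · m) ⁻¹' S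

lemma measurableSet_rcfCylinder (m : ℕ) (S : Set (List ℕ)) : MeasurableSet (rcfCylinder m S) := by
  refine measurableSet_rcfDomain.inter ?_
  rw [← Set.biUnion_preimage_singleton]
  exact .biUnion S.to_countable fun w _ => measurableSet_rcfDigits_eq m w

/-- `invBranch [a₁, …, aₙ] t = [0; a₁, …, aₙ + t]`. -/
noncomputable def invBranch : List ℕ → ℝ → ℝ
  | [], t => t
  | a :: w, t => ((a : ℝ) + invBranch w t)⁻¹

lemma invBranch_spec {w : List ℕ} (hw : ∀ a ∈ w, 0 < a) {t : ℝ} (ht : t ∈ rcfDomain) :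
    invBranch w t ∈ rcfDomain ∧ rcfDigits (invBranch w t) w.length = w ∧
      gaussMap^[w.length] (invBranch w t) = t := by
  induction w with
  | nil => exact ⟨ht, rfl, rfl⟩
  | cons a w ih =>
    obtain ⟨hmem, hdigits, hiter⟩ := ih fun b hb => hw b (List.mem_cons_of_mem a hb)
    have hIco : invBranch w t ∈ Set.Ico 0 1 := Set.Ioo_subset_Ico_self hmem.1
    refine ⟨inv_natCast_add_mem_rcfDomain hmem (hw a List.mem_cons_self), ?_, ?_⟩
    · simp only [invBranch, List.length_cons, rcfDigits, rcfDigit_one_inv_natCast_add hIco,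
        gaussMap_inv_natCast_add hIco, hdigits]
    · simp only [invBranch, List.length_cons, Function.iterate_succ_apply,
        gaussMap_inv_natCast_add hIco, hiter]

lemma invBranch_rcfDigits {x : ℝ} (hx : x ∈ rcfDomain) (m : ℕ) :
    invBranch (rcfDigits x m) (gaussMap^[m] x) = x := by
  induction m generalizing x with
  | zero => rfl
  | succ m ih =>
    rw [rcfDigits, invBranch, Function.iterate_succ_apply, ih (mapsTo_gaussMap hx),
      rcfDigit_one_add_gaussMap hx.1.1, inv_inv]

lemma rcfCylinder_inter_preimage {w : List ℕ} (hw : ∀ a ∈ w, 0 < a) {A : Set ℝ}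
    (hA : A ⊆ rcfDomain) :
    rcfCylinder w.length {w} ∩ gaussMap^[w.length] ⁻¹' A = invBranch w '' A := by
  ext x
  constructor
  · rintro ⟨⟨hx, hdigits : rcfDigits x w.length = w⟩, hxA⟩
    have hx_eq := invBranch_rcfDigits hx w.length
    rw [hdigits] at hx_eq
    exact ⟨_, hxA, hx_eq⟩
  · rintro ⟨t, htA, rfl⟩
    obtain ⟨hmem, hdigits, hiter⟩ := invBranch_spec hw (hA htA)
    exact ⟨⟨hmem, hdigits⟩, by rwa [Set.mem_preimage, hiter]⟩

/-- The denominator `q_n + q_{n-1} t` of `invBranch w t`, through the continuant recursion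
`q_{n+1} = a q_n + q_{n-1}` read from the first digit. -/
noncomputable def branchDen : List ℕ → ℝ → ℝ
  | [], _ => 1
  | [a], t => a + t
  | a :: b :: w, t => a * branchDen (b :: w) t + branchDen w t

lemma invBranch_nonneg (w : List ℕ) {t : ℝ} (ht : 0 ≤ t) : 0 ≤ invBranch w t := by
  induction w with
  | nil => exact ht
  | cons a w ih => exact inv_nonneg.2 (by positivity)

lemma branchDen_cons {a : ℕ} {w : List ℕ} (hw : ∀ b ∈ w, 0 < b) {t : ℝ} (ht : 0 ≤ t) :
    branchDen (a :: w) t = (a + invBranch w t) * branchDen w t := by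
  induction w generalizing a with
  | nil => simp [branchDen, invBranch]
  | cons b w ih =>
    have hb : (0 : ℝ) < b + invBranch w t := by
      have : (1 : ℝ) ≤ b := by exact_mod_cast hw b List.mem_cons_self
      linarith [invBranch_nonneg w ht]
    rw [branchDen, ih fun c hc => hw c (List.mem_cons_of_mem b hc), invBranch]
    field_simp

lemma one_le_branchDen {w : List ℕ} (hw : ∀ a ∈ w, 0 < a) {t : ℝ} (ht : 0 ≤ t) :
    1 ≤ branchDen w t := by
  induction w with
  | nil => rfl
  | cons a w ih =>
    have hw' : ∀ b ∈ w, 0 < b := fun b hb => hw b (List.mem_cons_of_mem a hb)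
    have : (1 : ℝ) ≤ a := by exact_mod_cast hw a List.mem_cons_self
    rw [branchDen_cons hw' ht]
    nlinarith [invBranch_nonneg w ht, ih hw']

lemma abs_sub_invBranch_mul {w : List ℕ} (hw : ∀ a ∈ w, 0 < a) {s t : ℝ} (hs : 0 ≤ s)
    (ht : 0 ≤ t) :
    |invBranch w s - invBranch w t| * (branchDen w s * branchDen w t) = |s - t| := by
  induction w with
  | nil => simp [invBranch, branchDen]
  | cons a w ih =>
    have hw' : ∀ b ∈ w, 0 < b := fun b hb => hw b (List.mem_cons_of_mem a hb)
    have ha : (1 : ℝ) ≤ a := by exact_mod_cast hw a List.mem_cons_self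
    have hs' : 0 < a + invBranch w s := by linarith [invBranch_nonneg w hs]
    have ht' : 0 < a + invBranch w t := by linarith [invBranch_nonneg w ht]
    rw [← ih hw', branchDen_cons hw' hs, branchDen_cons hw' ht, invBranch, invBranch,
      inv_sub_inv hs'.ne' ht'.ne', abs_div, abs_mul, abs_of_pos hs', abs_of_pos ht']
    field_simp
    rw [add_sub_add_left_eq_sub, abs_sub_comm]
    ring

lemma branchDen_le_branchDen_one (w : List ℕ) {t : ℝ} (ht : t ≤ 1) :
    branchDen w t ≤ branchDen w 1 := by
  induction w, t using branchDen.induct with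
  | case1 => rfl
  | case2 a t => simp only [branchDen]; linarith
  | case3 a b w t ih₁ ih₂ =>
    simp only [branchDen]
    have := ih₁ ht
    have := ih₂ ht
    gcongr

lemma branchDen_one_le_two_mul {w : List ℕ} (hw : ∀ a ∈ w, 0 < a) {t : ℝ} (ht : 0 ≤ t) :
    branchDen w 1 ≤ 2 * branchDen w t := by
  induction w, t using branchDen.induct with
  | case1 => simp [branchDen]
  | case2 a t =>
    have : (1 : ℝ) ≤ a := by exact_mod_cast hw a List.mem_cons_self
    simp only [branchDen]; linarith
  | case3 a b w t ih₁ ih₂ =>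
    simp only [branchDen]
    have := ih₁ (fun c hc => hw c (List.mem_cons_of_mem a hc)) ht
    have := ih₂ (fun c hc => hw c (List.mem_cons_of_mem a (List.mem_cons_of_mem b hc))) ht
    have : (0 : ℝ) ≤ a := Nat.cast_nonneg a
    nlinarith

lemma rcfDomain_subset_Icc : rcfDomain ⊆ Set.Icc 0 1 := fun _ hx => Set.Ioo_subset_Icc_self hx.1

lemma branchDen_one_sq_mul_abs_sub_invBranch_le {w : List ℕ} (hw : ∀ a ∈ w, 0 < a) {s t : ℝ}
    (hs : s ∈ Set.Icc 0 1) (ht : t ∈ Set.Icc 0 1) :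
    branchDen w 1 ^ 2 * |invBranch w s - invBranch w t| ≤ 4 * |s - t| := by
  have hs₁ := branchDen_one_le_two_mul hw hs.1
  have ht₁ := branchDen_one_le_two_mul hw ht.1
  have h₀ : 0 ≤ branchDen w 1 := zero_le_one.trans (one_le_branchDen hw zero_le_one)
  rw [← abs_sub_invBranch_mul hw hs.1 ht.1]
  have := abs_nonneg (invBranch w s - invBranch w t)
  have : branchDen w 1 ^ 2 ≤ 4 * (branchDen w s * branchDen w t) := by nlinarith
  nlinarith

lemma abs_sub_le_branchDen_one_sq_mul {w : List ℕ} (hw : ∀ a ∈ w, 0 < a) {s t : ℝ}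
    (hs : s ∈ Set.Icc 0 1) (ht : t ∈ Set.Icc 0 1) :
    |s - t| ≤ branchDen w 1 ^ 2 * |invBranch w s - invBranch w t| := by
  have hs₁ := branchDen_le_branchDen_one w hs.2
  have ht₁ := branchDen_le_branchDen_one w ht.2
  have hs₀ := one_le_branchDen hw hs.1
  have ht₀ := one_le_branchDen hw ht.1
  rw [← abs_sub_invBranch_mul hw hs.1 ht.1]
  have := abs_nonneg (invBranch w s - invBranch w t)
  have : branchDen w s * branchDen w t ≤ branchDen w 1 ^ 2 := by nlinarith
  nlinarith

lemma volume_image_invBranch_le {w : List ℕ} (hw : ∀ a ∈ w, 0 < a) {A : Set ℝ}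
    (hA : A ⊆ Set.Icc 0 1) :
    volume (invBranch w '' A) ≤ 4 * (ENNReal.ofReal (branchDen w 1) ^ 2)⁻¹ * volume A := by
  set κ := (branchDen w 1).toNNReal
  have hκ : (1 : ℝ) ≤ branchDen w 1 := one_le_branchDen hw zero_le_one
  have hκ₀ : κ ≠ 0 := by simp [κ]; linarith
  have hlip : LipschitzOnWith (4 * (κ ^ 2)⁻¹) (invBranch w) A := by
    refine LipschitzOnWith.of_dist_le_mul fun s hs t ht => ?_
    rw [Real.dist_eq, Real.dist_eq]
    push_cast
    rw [Real.coe_toNNReal _ (by linarith), mul_right_comm, ← div_eq_mul_inv,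
      le_div_iff₀' (by positivity)]
    exact branchDen_one_sq_mul_abs_sub_invBranch_le hw (hA hs) (hA ht)
  have := hlip.hausdorffMeasure_image_le zero_le_one
  rw [hausdorffMeasure_real, ENNReal.rpow_one, ENNReal.coe_mul,
    ENNReal.coe_inv (pow_ne_zero 2 hκ₀)] at this
  exact this

lemma volume_le_image_invBranch {w : List ℕ} (hw : ∀ a ∈ w, 0 < a) {A : Set ℝ}
    (hA : A ⊆ rcfDomain) :
    volume A ≤ ENNReal.ofReal (branchDen w 1) ^ 2 * volume (invBranch w '' A) := by
  have hinv : ∀ t ∈ A, gaussMap^[w.length] (invBranch w t) = t :=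
    fun t ht => (invBranch_spec hw (hA ht)).2.2
  have hlip : LipschitzOnWith ((branchDen w 1).toNNReal ^ 2) (gaussMap^[w.length])
      (invBranch w '' A) := by
    refine LipschitzOnWith.of_dist_le_mul ?_
    rintro _ ⟨s, hs, rfl⟩ _ ⟨t, ht, rfl⟩
    rw [Real.dist_eq, Real.dist_eq, hinv s hs, hinv t ht, NNReal.coe_pow,
      Real.coe_toNNReal _ (zero_le_one.trans (one_le_branchDen hw zero_le_one))]
    exact abs_sub_le_branchDen_one_sq_mul hw (rcfDomain_subset_Icc (hA hs))
      (rcfDomain_subset_Icc (hA ht))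
  have := hlip.hausdorffMeasure_image_le zero_le_one
  rwa [hausdorffMeasure_real, ENNReal.rpow_one, Set.image_image, Set.image_congr hinv,
    Set.image_id', ENNReal.coe_pow] at this

lemma rcfCylinder_eq_image {w : List ℕ} (hw : ∀ a ∈ w, 0 < a) :
    rcfCylinder w.length {w} = invBranch w '' rcfDomain := by
  rw [← rcfCylinder_inter_preimage hw subset_rfl, eq_comm, Set.inter_eq_left]
  exact fun x hx => mapsTo_gaussMap.iterate _ hx.1

lemma one_le_mul_volume_rcfCylinder {w : List ℕ} (hw : ∀ a ∈ w, 0 < a) :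
    1 ≤ ENNReal.ofReal (branchDen w 1) ^ 2 * volume (rcfCylinder w.length {w}) := by
  simpa [volume_rcfDomain, rcfCylinder_eq_image hw] using
    volume_le_image_invBranch hw subset_rfl

lemma volume_rcfCylinder_le {w : List ℕ} (hw : ∀ a ∈ w, 0 < a) :
    volume (rcfCylinder w.length {w}) ≤ 4 * (ENNReal.ofReal (branchDen w 1) ^ 2)⁻¹ := by
  simpa [volume_rcfDomain, rcfCylinder_eq_image hw] using
    volume_image_invBranch_le hw rcfDomain_subset_Icc

lemma length_eq_and_pos_of_mem_rcfCylinder {m : ℕ} {w : List ℕ} {x : ℝ}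
    (hx : x ∈ rcfCylinder m {w}) :
    w.length = m ∧ ∀ a ∈ w, 0 < a := by
  obtain ⟨hx, hxw : rcfDigits x m = w⟩ := hx
  subst hxw
  exact ⟨length_rcfDigits x m, fun a ha => pos_of_mem_rcfDigits hx ha⟩

lemma volume_rcfCylinder_singleton_inter_preimage_le (m : ℕ) (w : List ℕ) {A : Set ℝ}
    (hA : A ⊆ rcfDomain) :
    volume (rcfCylinder m {w} ∩ gaussMap^[m] ⁻¹' A) ≤
      4 * volume (rcfCylinder m {w}) * volume A := by
  rcases (rcfCylinder m {w}).eq_empty_or_nonempty with h | ⟨x, hx⟩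
  · simp [h]
  obtain ⟨rfl, hw⟩ := length_eq_and_pos_of_mem_rcfCylinder hx
  set κ := ENNReal.ofReal (branchDen w 1) ^ 2
  have hκ : κ ≠ 0 := by simp [κ]; linarith [one_le_branchDen hw zero_le_one]
  calc volume (rcfCylinder w.length {w} ∩ gaussMap^[w.length] ⁻¹' A)
      ≤ 4 * κ⁻¹ * volume A := by
        rw [rcfCylinder_inter_preimage hw hA]
        exact volume_image_invBranch_le hw (hA.trans rcfDomain_subset_Icc)
    _ ≤ 4 * κ⁻¹ * (κ * volume (rcfCylinder w.length {w})) * volume A :=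
        mul_le_mul_left (le_mul_of_one_le_right' (one_le_mul_volume_rcfCylinder hw)) _
    _ = 4 * volume (rcfCylinder w.length {w}) * volume A := by
        rw [← mul_assoc, mul_assoc 4, ENNReal.inv_mul_cancel hκ (by simp [κ]), mul_one]

lemma volume_rcfCylinder_singleton_mul_le (m : ℕ) (w : List ℕ) {A : Set ℝ}
    (hA : A ⊆ rcfDomain) :
    volume (rcfCylinder m {w}) * volume A ≤
      4 * volume (rcfCylinder m {w} ∩ gaussMap^[m] ⁻¹' A) := by
  rcases (rcfCylinder m {w}).eq_empty_or_nonempty with h | ⟨x, hx⟩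
  · simp [h]
  obtain ⟨rfl, hw⟩ := length_eq_and_pos_of_mem_rcfCylinder hx
  set κ := ENNReal.ofReal (branchDen w 1) ^ 2
  have hκ : κ ≠ 0 := by simp [κ]; linarith [one_le_branchDen hw zero_le_one]
  calc volume (rcfCylinder w.length {w}) * volume A
      ≤ 4 * κ⁻¹ * (κ * volume (invBranch w '' A)) :=
        mul_le_mul' (volume_rcfCylinder_le hw) (volume_le_image_invBranch hw hA)
    _ = 4 * volume (rcfCylinder w.length {w} ∩ gaussMap^[w.length] ⁻¹' A) := by
        rw [rcfCylinder_inter_preimage hw hA, mul_assoc, ← mul_assoc κ⁻¹,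
          ENNReal.inv_mul_cancel hκ (by simp [κ]), one_mul]

lemma volume_rcfCylinder_inter (m : ℕ) (S : Set (List ℕ)) (T : Set ℝ) :
    volume (rcfCylinder m S ∩ T) = ∑' w : S, volume (rcfCylinder m {w.1} ∩ T) := by
  have hS : rcfCylinder m S = ⋃ w ∈ S, rcfCylinder m {w} := by
    ext x
    simp [rcfCylinder]
  have hdisj : S.PairwiseDisjoint fun w => rcfCylinder m {w} :=
    fun w _ w' _ hne => Set.disjoint_left.2 fun x hx hx' => hne (hx.2.symm.trans hx'.2)
  rw [← Measure.restrict_apply (measurableSet_rcfCylinder m S), hS,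
    measure_biUnion S.to_countable hdisj fun w _ => measurableSet_rcfCylinder m {w}]
  simp only [Measure.restrict_apply (measurableSet_rcfCylinder _ _)]

lemma volume_rcfCylinder (m : ℕ) (S : Set (List ℕ)) :
    volume (rcfCylinder m S) = ∑' w : S, volume (rcfCylinder m {w.1}) := by
  simpa using volume_rcfCylinder_inter m S Set.univ

lemma volume_rcfCylinder_inter_preimage_le (m : ℕ) (S : Set (List ℕ)) {A : Set ℝ}
    (hA : A ⊆ rcfDomain) :
    volume (rcfCylinder m S ∩ gaussMap^[m] ⁻¹' A) ≤ 4 * volume (rcfCylinder m S) * volume A := by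
  rw [volume_rcfCylinder_inter, volume_rcfCylinder, ← ENNReal.tsum_mul_left,
    ← ENNReal.tsum_mul_right]
  exact ENNReal.tsum_le_tsum fun w => volume_rcfCylinder_singleton_inter_preimage_le m w hA

lemma volume_rcfCylinder_mul_le (m : ℕ) (S : Set (List ℕ)) {A : Set ℝ}
    (hA : A ⊆ rcfDomain) :
    volume (rcfCylinder m S) * volume A ≤ 4 * volume (rcfCylinder m S ∩ gaussMap^[m] ⁻¹' A) := by
  rw [volume_rcfCylinder_inter, volume_rcfCylinder, ← ENNReal.tsum_mul_right,
    ← ENNReal.tsum_mul_left]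
  exact ENNReal.tsum_le_tsum fun w => volume_rcfCylinder_singleton_mul_le m w hA

lemma volume_rcfCylinder_one_le {a : ℕ} (ha : 0 < a) :
    volume (rcfCylinder 1 {[a]}) ≤ 4 / (a : ℝ≥0∞) ^ 2 := by
  have h := volume_rcfCylinder_le (w := [a]) (by simpa using ha)
  rw [show branchDen [a] 1 = ((a + 1 : ℕ) : ℝ) by simp [branchDen], ENNReal.ofReal_natCast] at h
  refine h.trans ?_
  rw [div_eq_mul_inv]
  gcongr
  exact_mod_cast Nat.le_succ a

lemma one_le_four_mul_volume_rcfCylinder_one : 1 ≤ 4 * volume (rcfCylinder 1 {[1]}) := by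
  have h := one_le_mul_volume_rcfCylinder (w := [1]) (by simp)
  rwa [show branchDen [1] 1 = 2 by norm_num [branchDen], ENNReal.ofReal_ofNat,
    show (2 : ℝ≥0∞) ^ 2 = 4 by norm_num] at h

lemma rcfDigit_eq_iff (x : ℝ) {j m : ℕ} (hj : 0 < j) (hjm : j ≠ m + 1) (r : ℕ) :
    rcfDigit x j = r ↔ (j ≤ m → (rcfDigits x m)[j - 1]? = some r) ∧
      (m + 1 < j → rcfDigit (gaussMap (gaussMap^[m] x)) (j - (m + 1)) = r) := by
  rcases le_or_gt j m with hle | hlt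
  · rw [getElem?_rcfDigits x (by omega), Nat.sub_add_cancel hj, Option.some_inj]
    exact ⟨fun h => ⟨fun _ => h, by omega⟩, fun h => h.1 hle⟩
  · rw [← Function.iterate_succ_apply' gaussMap, ← rcfDigit_add_iterate x (by omega),
      Nat.sub_add_cancel (by omega)]
    exact ⟨fun h => ⟨by omega, fun _ => h⟩, fun h => h.2 (by omega)⟩

lemma volume_inter_preimage_rcfCylinder_one_le (m : ℕ) (S : Set (List ℕ)) {B : Set ℝ}
    (hB : B ⊆ rcfDomain) {R : ℕ} (hR : 0 < R) :
    volume (rcfCylinder m S ∩ gaussMap^[m] ⁻¹' (rcfCylinder 1 {[R]} ∩ gaussMap ⁻¹' B)) ≤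
      4096 / (R : ℝ≥0∞) ^ 2 *
        volume (rcfCylinder m S ∩ gaussMap^[m] ⁻¹' (rcfCylinder 1 {[1]} ∩ gaussMap ⁻¹' B)) := by
  set D := rcfCylinder m S
  have hIB (a : ℕ) : rcfCylinder 1 {[a]} ∩ gaussMap ⁻¹' B ⊆ rcfDomain := fun _ h => h.1.1
  have hDB : volume D * volume B ≤
      64 * volume (D ∩ gaussMap^[m] ⁻¹' (rcfCylinder 1 {[1]} ∩ gaussMap ⁻¹' B)) :=
    calc volume D * volume B
        ≤ volume D * (4 * volume (rcfCylinder 1 {[1]}) * volume B) :=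
          mul_le_mul_right (le_mul_of_one_le_left' one_le_four_mul_volume_rcfCylinder_one) _
      _ ≤ volume D * (4 * (4 * volume (rcfCylinder 1 {[1]} ∩ gaussMap ⁻¹' B))) := by
          rw [mul_assoc 4]
          gcongr volume D * (4 * ?_)
          exact volume_rcfCylinder_mul_le 1 {[1]} hB
      _ = 16 * (volume D * volume (rcfCylinder 1 {[1]} ∩ gaussMap ⁻¹' B)) := by ring
      _ ≤ 16 * (4 * volume (D ∩ gaussMap^[m] ⁻¹' (rcfCylinder 1 {[1]} ∩ gaussMap ⁻¹' B))) := by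
          gcongr 16 * ?_
          exact volume_rcfCylinder_mul_le m S (hIB 1)
      _ = 64 * volume (D ∩ gaussMap^[m] ⁻¹' (rcfCylinder 1 {[1]} ∩ gaussMap ⁻¹' B)) := by ring
  calc volume (D ∩ gaussMap^[m] ⁻¹' (rcfCylinder 1 {[R]} ∩ gaussMap ⁻¹' B))
      ≤ 4 * volume D * volume (rcfCylinder 1 {[R]} ∩ gaussMap ⁻¹' B) :=
        volume_rcfCylinder_inter_preimage_le m S (hIB R)
    _ ≤ 4 * volume D * (4 * (4 / (R : ℝ≥0∞) ^ 2) * volume B) := by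
        gcongr
        exact (volume_rcfCylinder_inter_preimage_le 1 {[R]} hB).trans
          (by gcongr; exact volume_rcfCylinder_one_le hR)
    _ = 64 / (R : ℝ≥0∞) ^ 2 * (volume D * volume B) := by
        simp only [div_eq_mul_inv]; ring
    _ ≤ 64 / (R : ℝ≥0∞) ^ 2 * (64 * volume
          (D ∩ gaussMap^[m] ⁻¹' (rcfCylinder 1 {[1]} ∩ gaussMap ⁻¹' B))) := by gcongr
    _ = _ := by simp only [div_eq_mul_inv]; ring

theorem volume_rcfDigit_eq_le {ι : Type*} (k r : ι → ℕ) (hk : ∀ i, 0 < k i) {m : ℕ}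
    (hkm : ∀ i, k i ≠ m + 1) {R : ℕ} (hR : 0 < R) :
    volume {x | x ∈ rcfDomain ∧ (∀ i, rcfDigit x (k i) = r i) ∧ rcfDigit x (m + 1) = R} ≤
      4096 / (R : ℝ≥0∞) ^ 2 * volume {x | x ∈ rcfDomain ∧ ∀ i, rcfDigit x (k i) = r i} := by
  -- `D` constrains the digits before position `m + 1`, and `G^[m + 1] x ∈ B` those after it.
  set D := rcfCylinder m {w | ∀ i, k i ≤ m → w[k i - 1]? = some (r i)}
  set B := {y | y ∈ rcfDomain ∧ ∀ i, m + 1 < k i → rcfDigit y (k i - (m + 1)) = r i}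
  have hsplit (a : ℕ) : D ∩ gaussMap^[m] ⁻¹' (rcfCylinder 1 {[a]} ∩ gaussMap ⁻¹' B) =
      {x | x ∈ rcfDomain ∧ (∀ i, rcfDigit x (k i) = r i) ∧ rcfDigit x (m + 1) = a} := by
    ext x
    simp only [D, B, rcfCylinder, Set.mem_inter_iff, Set.mem_preimage, Set.mem_ofPred_eq,
      Set.mem_singleton_iff, rcfDigits_one, List.cons.injEq, and_true]
    rw [(forall_congr' fun i => rcfDigit_eq_iff x (hk i) (hkm i) (r i)).trans forall_and,
      add_comm m, rcfDigit_add_iterate x one_pos]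
    constructor
    · rintro ⟨⟨hx, h₁⟩, ⟨-, ha⟩, -, h₂⟩
      exact ⟨hx, ⟨h₁, h₂⟩, ha⟩
    · rintro ⟨hx, ⟨h₁, h₂⟩, ha⟩
      have hy := mapsTo_gaussMap.iterate m hx
      exact ⟨⟨hx, h₁⟩, ⟨hy, ha⟩, mapsTo_gaussMap hy, h₂⟩
  rw [← hsplit]
  refine (volume_inter_preimage_rcfCylinder_one_le m _ (fun _ h => h.1) hR).trans ?_
  rw [hsplit]
  gcongr with x
  exact And.left

/-- Conditional measure estimate for cylinder sets of regular continued fraction digits: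
`λ(E(k₁…kₙ k_{n+1}; r₁…rₙ r)) ≪ (1/r²) · λ(E(k₁…kₙ; r₁…rₙ))`. -/
theorem rcf_cylinder_cond_le :
    ∃ C : ℝ, 0 < C ∧ ∀ (n : ℕ) (k : Fin (n + 1) → ℕ) (r : Fin (n + 1) → ℕ),
      (∀ i, 0 < k i) → Function.Injective k → (∀ i, 0 < r i) →
      volume {x : ℝ | x ∈ Set.Ioo (0 : ℝ) 1 ∧ Irrational x ∧ ∀ i, rcfDigit x (k i) = r i}
        ≤ ENNReal.ofReal (C / (r (Fin.last n) : ℝ) ^ 2) *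
          volume {x : ℝ | x ∈ Set.Ioo (0 : ℝ) 1 ∧ Irrational x ∧
            ∀ i : Fin n, rcfDigit x (k i.castSucc) = r i.castSucc} := by
  refine ⟨4096, by norm_num, fun n k r hk hinj hr => ?_⟩
  obtain ⟨m, hm⟩ := Nat.exists_eq_add_one.2 (hk (Fin.last n))
  have hkm (i : Fin n) : k i.castSucc ≠ m + 1 :=
    fun h => (Fin.castSucc_lt_last i).ne (hinj (h.trans hm.symm))
  have key := volume_rcfDigit_eq_le (fun i : Fin n => k i.castSucc) (fun i => r i.castSucc)
    (fun i => hk i.castSucc) hkm (hr (Fin.last n))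
  rw [← hm] at key
  simp only [rcfDomain, Set.mem_ofPred_eq, and_assoc] at key
  simp only [Fin.forall_fin_succ']
  rwa [ENNReal.ofReal_div_of_pos (pow_pos (Nat.cast_pos.2 (hr _)) 2),
    ENNReal.ofReal_pow (Nat.cast_nonneg _), ENNReal.ofReal_natCast, ENNReal.ofReal_ofNat]
end

section
/- Let x ∈ (0,1) be irrational with regular continued fraction digits a_n(x) and negative continued fraction digits a'_n(x). For every integer k ≥ 1 and every integer j with 0 ≤ j < a_{2k+1}(x), setting N = a_1(x) + a_3(x) + ⋯ + a_{2k−1}(x) + j, one has ∑_{n=1}^{N} a'_n(x) = 2N + ∑_{i=1}^{k} a_{2i}(x). -/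
/-! Write `u = 1/y`. Since `1 - 1/(w+1) = (1 + 1/w)⁻¹`, one step of `T` sends `1 - 1/(w+1)`
(`w > 0`, `1/w ∉ ℤ`) to `1 - G(w)` with digit `⌊1/w⌋ + 2`. Starting from `1 - y = 1 - 1/u`, `T`
therefore runs through the points `1 - 1/(u - j)` with digit `2` as long as `u - j > 2`, that is
for `j < a₁(y) - 1`; the next step, with `w = u - a₁(y) = G(y)`, has digit `a₂(y) + 2` and lands
on `1 - G²(y)`, where the pattern restarts. So each pair `(a_{2i-1}, a_{2i})` of regular digits
becomes `a_{2i-1}` negative digits with sum `2 a_{2i-1} + a_{2i}`. -/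

open MeasureTheory Filter Real

/-- The negative continued fraction map `T(y) = -1/y - ⌊-1/y⌋` (with `T 0 = 0`). -/
noncomputable def negT (y : ℝ) : ℝ := Int.fract (-1 / y)

/-- The `n`-th negative continued fraction digit `a'_n(x) = ⌈1 / T^{n-1}(1-x)⌉`. -/
noncomputable def negDigit (x : ℝ) (n : ℕ) : ℕ := (⌈1 / negT^[n - 1] (1 - x)⌉).toNat

open Finset

lemma irrational_gaussMap {y : ℝ} (hy : Irrational y) : Irrational (gaussMap y) := by
  rw [gaussMap, one_div]
  exact hy.inv.sub_intCast _

lemma gaussMap_mem_Ioo {y : ℝ} (hy : Irrational y) : gaussMap y ∈ Set.Ioo 0 1 :=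
  ⟨(Int.fract_nonneg _).lt_of_ne' (irrational_gaussMap hy).ne_zero, Int.fract_lt_one _⟩

lemma irrational_gaussMap_iterate {x : ℝ} (hx : Irrational x) (n : ℕ) :
    Irrational (gaussMap^[n] x) :=
  Set.MapsTo.iterate (s := {y | Irrational y}) (fun _ => irrational_gaussMap) n hx

lemma gaussMap_iterate_mem_Ioo {x : ℝ} (hx : x ∈ Set.Ioo 0 1) (hirr : Irrational x) :
    ∀ n, gaussMap^[n] x ∈ Set.Ioo 0 1
  | 0 => hx
  | n + 1 => by
    rw [Function.iterate_succ_apply']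
    exact gaussMap_mem_Ioo (irrational_gaussMap_iterate hirr n)

lemma rcfDigit_gaussMap_iterate (x : ℝ) (m n : ℕ) :
    rcfDigit (gaussMap^[m] x) (n + 1) = rcfDigit x (m + n + 1) := by
  simp [rcfDigit, ← Function.iterate_add_apply, add_comm]

lemma rcfDigit_one_cast {y : ℝ} (hy : 0 ≤ y) : (rcfDigit y 1 : ℤ) = ⌊1 / y⌋ := by
  simp [rcfDigit, Int.floor_nonneg.2 (inv_nonneg.2 hy)]

lemma rcfDigit_two_cast (y : ℝ) : (rcfDigit y 2 : ℤ) = ⌊1 / gaussMap y⌋ := by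
  have h := rcfDigit_gaussMap_iterate y 1 0
  rw [Function.iterate_one] at h
  rw [← h]
  exact rcfDigit_one_cast (Int.fract_nonneg _)

lemma one_div_sub_rcfDigit_one {y : ℝ} (hy : 0 ≤ y) : 1 / y - rcfDigit y 1 = gaussMap y := by
  rw [gaussMap, ← Int.self_sub_floor, ← rcfDigit_one_cast hy, Int.cast_natCast]

lemma one_le_rcfDigit_one {y : ℝ} (hy : y ∈ Set.Ioo 0 1) : 1 ≤ rcfDigit y 1 := by
  have h := rcfDigit_one_cast hy.1.le
  have : (1 : ℤ) ≤ ⌊1 / y⌋ := Int.le_floor.2 (by simpa using (one_le_one_div hy.1 hy.2.le))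
  omega

lemma negDigit_succ (x : ℝ) (n : ℕ) : negDigit x (n + 1) = (⌈1 / negT^[n] (1 - x)⌉).toNat := rfl

lemma negDigit_add_of_iterate_eq {x y : ℝ} {m : ℕ} (h : negT^[m] (1 - x) = 1 - y) (n : ℕ) :
    negDigit x (m + n + 1) = negDigit y (n + 1) := by
  rw [negDigit_succ, negDigit_succ, add_comm m, Function.iterate_add_apply, h]

lemma sum_negDigit_add_of_iterate_eq {x y : ℝ} {m : ℕ} (h : negT^[m] (1 - x) = 1 - y) (n : ℕ) :
    ∑ i ∈ Icc 1 (m + n), negDigit x i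
      = ∑ i ∈ Icc 1 m, negDigit x i + ∑ i ∈ Icc 1 n, negDigit y i := by
  induction n with
  | zero => simp
  | succ n ih =>
    rw [← add_assoc, sum_Icc_succ_top (by omega), ih, negDigit_add_of_iterate_eq h,
      sum_Icc_succ_top (by omega), add_assoc]

lemma one_div_one_sub_one_div_add_one {w : ℝ} (hw : 0 < w) :
    1 / (1 - 1 / (w + 1)) = 1 + 1 / w := by
  rw [one_sub_div (by positivity), add_sub_cancel_right, one_div_div, add_div, div_self hw.ne']

lemma negT_one_sub_one_div_add_one {w : ℝ} (hw : 0 < w) (hfr : Int.fract (1 / w) ≠ 0) :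
    negT (1 - 1 / (w + 1)) = 1 - gaussMap w := by
  rw [negT, neg_div, one_div_one_sub_one_div_add_one hw, neg_add, add_comm, ← sub_eq_add_neg,
    Int.fract_sub_one, Int.fract_neg hfr, gaussMap]

lemma ceil_one_div_one_sub_one_div_add_one {w : ℝ} (hw : 0 < w) (hfr : Int.fract (1 / w) ≠ 0) :
    ⌈1 / (1 - 1 / (w + 1))⌉ = ⌊1 / w⌋ + 2 := by
  rw [one_div_one_sub_one_div_add_one hw, Int.ceil_one_add,
    (Int.ceil_eq_floor_add_one_iff_notMem _).2 (Int.fract_ne_zero_iff.1 hfr)]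
  ring

lemma negT_one_sub_one_div_add_one_of_one_lt {w : ℝ} (hw : 1 < w) :
    negT (1 - 1 / (w + 1)) = 1 - 1 / w ∧ ⌈1 / (1 - 1 / (w + 1))⌉ = 2 := by
  have hw0 : 0 < w := by linarith
  have hinv : 1 / w ∈ Set.Ico 0 1 := ⟨by positivity, (div_lt_one hw0).2 hw⟩
  have hfr : Int.fract (1 / w) = 1 / w := Int.fract_eq_self.2 hinv
  have hfr0 : Int.fract (1 / w) ≠ 0 := by rw [hfr]; positivity
  refine ⟨?_, ?_⟩
  · rw [negT_one_sub_one_div_add_one hw0 hfr0, gaussMap, hfr]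
  · rw [ceil_one_div_one_sub_one_div_add_one hw0 hfr0, Int.floor_eq_zero_iff.2 hinv, zero_add]

lemma one_lt_one_div_sub_of_lt_rcfDigit {y : ℝ} (hy : 0 < y) (hirr : Irrational y) {j : ℕ}
    (hj : j < rcfDigit y 1) : 1 < 1 / y - j := by
  have hG := (gaussMap_mem_Ioo hirr).1
  have hja : (j : ℝ) + 1 ≤ rcfDigit y 1 := by exact_mod_cast hj
  linarith [one_div_sub_rcfDigit_one hy.le]

lemma negT_one_sub_one_div_one_div_sub {y : ℝ} (hy : 0 < y) (hirr : Irrational y) {j : ℕ}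
    (hj : j + 1 < rcfDigit y 1) :
    negT (1 - 1 / (1 / y - j)) = 1 - 1 / (1 / y - (j + 1 : ℕ))
      ∧ ⌈1 / (1 - 1 / (1 / y - j))⌉ = 2 := by
  rw [show 1 / y - (j : ℝ) = (1 / y - (j + 1 : ℕ)) + 1 by push_cast; ring]
  exact negT_one_sub_one_div_add_one_of_one_lt (one_lt_one_div_sub_of_lt_rcfDigit hy hirr hj)

lemma negT_iterate_one_sub_of_lt_rcfDigit {y : ℝ} (hy : 0 < y) (hirr : Irrational y) {j : ℕ}
    (hj : j < rcfDigit y 1) : negT^[j] (1 - y) = 1 - 1 / (1 / y - j) := by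
  induction j with
  | zero => simp
  | succ j ih =>
    rw [Function.iterate_succ_apply', ih (by omega),
      (negT_one_sub_one_div_one_div_sub hy hirr hj).1]

lemma negDigit_of_succ_lt_rcfDigit {y : ℝ} (hy : 0 < y) (hirr : Irrational y) {n : ℕ}
    (hn : n + 1 < rcfDigit y 1) : negDigit y (n + 1) = 2 := by
  rw [negDigit_succ, negT_iterate_one_sub_of_lt_rcfDigit hy hirr (by omega),
    (negT_one_sub_one_div_one_div_sub hy hirr hn).2]
  rfl

lemma sum_negDigit_of_lt_rcfDigit {y : ℝ} (hy : 0 < y) (hirr : Irrational y) {j : ℕ}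
    (hj : j < rcfDigit y 1) : ∑ n ∈ Icc 1 j, negDigit y n = 2 * j := by
  induction j with
  | zero => simp
  | succ j ih =>
    rw [sum_Icc_succ_top (by omega), ih (by omega), negDigit_of_succ_lt_rcfDigit hy hirr hj]
    ring

lemma negT_iterate_pred_rcfDigit_one {y : ℝ} (hy : y ∈ Set.Ioo 0 1) (hirr : Irrational y) :
    negT^[rcfDigit y 1 - 1] (1 - y) = 1 - 1 / (gaussMap y + 1) := by
  have ha := one_le_rcfDigit_one hy
  rw [negT_iterate_one_sub_of_lt_rcfDigit hy.1 hirr (by omega),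
    ← one_div_sub_rcfDigit_one hy.1.le, Nat.cast_sub ha]
  ring

lemma negT_iterate_rcfDigit_one {y : ℝ} (hy : y ∈ Set.Ioo 0 1) (hirr : Irrational y) :
    negT^[rcfDigit y 1] (1 - y) = 1 - gaussMap^[2] y := by
  rw [← Nat.sub_add_cancel (one_le_rcfDigit_one hy), Function.iterate_succ_apply',
    negT_iterate_pred_rcfDigit_one hy hirr,
    negT_one_sub_one_div_add_one (gaussMap_mem_Ioo hirr).1
      (irrational_gaussMap (irrational_gaussMap hirr)).ne_zero]
  rfl

lemma negDigit_rcfDigit_one {y : ℝ} (hy : y ∈ Set.Ioo 0 1) (hirr : Irrational y) :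
    negDigit y (rcfDigit y 1) = rcfDigit y 2 + 2 := by
  rw [← Nat.sub_add_cancel (one_le_rcfDigit_one hy), negDigit_succ,
    negT_iterate_pred_rcfDigit_one hy hirr,
    ceil_one_div_one_sub_one_div_add_one (gaussMap_mem_Ioo hirr).1
      (irrational_gaussMap (irrational_gaussMap hirr)).ne_zero,
    ← rcfDigit_two_cast]
  omega

lemma sum_negDigit_rcfDigit_one {y : ℝ} (hy : y ∈ Set.Ioo 0 1) (hirr : Irrational y) :
    ∑ n ∈ Icc 1 (rcfDigit y 1), negDigit y n = 2 * rcfDigit y 1 + rcfDigit y 2 := by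
  have ha := one_le_rcfDigit_one hy
  conv_lhs => rw [← Nat.sub_add_cancel ha]
  rw [sum_Icc_succ_top (by omega), sum_negDigit_of_lt_rcfDigit hy.1 hirr (by omega),
    Nat.sub_add_cancel ha, negDigit_rcfDigit_one hy hirr]
  omega

lemma negT_iterate_sum_rcfDigit_odd {x : ℝ} (hx : x ∈ Set.Ioo 0 1) (hirr : Irrational x)
    (k : ℕ) : negT^[∑ i ∈ Icc 1 k, rcfDigit x (2 * i - 1)] (1 - x) = 1 - gaussMap^[2 * k] x := by
  induction k with
  | zero => simp
  | succ k ih =>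
    rw [sum_Icc_succ_top (by omega), show 2 * (k + 1) - 1 = 2 * k + 0 + 1 by omega,
      ← rcfDigit_gaussMap_iterate x (2 * k) 0, add_comm, Function.iterate_add_apply, ih,
      negT_iterate_rcfDigit_one (gaussMap_iterate_mem_Ioo hx hirr _)
        (irrational_gaussMap_iterate hirr _),
      ← Function.iterate_add_apply, show 2 + 2 * k = 2 * (k + 1) by ring]

lemma sum_negDigit_sum_rcfDigit_odd {x : ℝ} (hx : x ∈ Set.Ioo 0 1) (hirr : Irrational x)
    (k : ℕ) :
    ∑ n ∈ Icc 1 (∑ i ∈ Icc 1 k, rcfDigit x (2 * i - 1)), negDigit x n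
      = 2 * ∑ i ∈ Icc 1 k, rcfDigit x (2 * i - 1) + ∑ i ∈ Icc 1 k, rcfDigit x (2 * i) := by
  induction k with
  | zero => simp
  | succ k ih =>
    rw [sum_Icc_succ_top (by omega) (fun i => rcfDigit x (2 * i - 1)),
      sum_Icc_succ_top (by omega) (fun i => rcfDigit x (2 * i)),
      sum_negDigit_add_of_iterate_eq (negT_iterate_sum_rcfDigit_odd hx hirr k), ih,
      show 2 * (k + 1) - 1 = 2 * k + 0 + 1 by omega, show 2 * (k + 1) = 2 * k + 1 + 1 by ring,
      ← rcfDigit_gaussMap_iterate x (2 * k) 0, ← rcfDigit_gaussMap_iterate x (2 * k) 1,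
      sum_negDigit_rcfDigit_one (gaussMap_iterate_mem_Ioo hx hirr _)
        (irrational_gaussMap_iterate hirr _)]
    ring

theorem negDigit_sum_recoding_general (x : ℝ) (hx : x ∈ Set.Ioo (0 : ℝ) 1) (hirr : Irrational x)
    (k : ℕ) (j : ℕ) (hj : j < rcfDigit x (2 * k + 1)) :
    ∑ n ∈ Finset.Icc 1 ((∑ i ∈ Finset.Icc 1 k, rcfDigit x (2 * i - 1)) + j), negDigit x n
      = 2 * ((∑ i ∈ Finset.Icc 1 k, rcfDigit x (2 * i - 1)) + j) +
        ∑ i ∈ Finset.Icc 1 k, rcfDigit x (2 * i) := by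
  have hy := gaussMap_iterate_mem_Ioo hx hirr (2 * k)
  have hj' : j < rcfDigit (gaussMap^[2 * k] x) 1 := by
    rwa [← zero_add 1, rcfDigit_gaussMap_iterate]
  rw [sum_negDigit_add_of_iterate_eq (negT_iterate_sum_rcfDigit_odd hx hirr k),
    sum_negDigit_sum_rcfDigit_odd hx hirr k,
    sum_negDigit_of_lt_rcfDigit hy.1 (irrational_gaussMap_iterate hirr _) hj']
  ring

/-- Recoding identity: with `N = a₁ + a₃ + ⋯ + a_{2k-1} + j` (`0 ≤ j < a_{2k+1}`),
the sum of the first `N` negative digits equals `2N + ∑_{i=1}^k a_{2i}`. -/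
theorem negDigit_sum_recoding (x : ℝ) (hx : x ∈ Set.Ioo (0 : ℝ) 1) (hirr : Irrational x)
    (k : ℕ) (hk : 1 ≤ k) (j : ℕ) (hj : j < rcfDigit x (2 * k + 1)) :
    ∑ n ∈ Finset.Icc 1 ((∑ i ∈ Finset.Icc 1 k, rcfDigit x (2 * i - 1)) + j), negDigit x n
      = 2 * ((∑ i ∈ Finset.Icc 1 k, rcfDigit x (2 * i - 1)) + j) +
        ∑ i ∈ Finset.Icc 1 k, rcfDigit x (2 * i) :=
  negDigit_sum_recoding_general x hx hirr k j hj
end
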